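/- Fix k ≥ 2, let T_1, ..., T_{2k-1} be trees each with at least two vertices, let G be the Cartesian product T_1 □ T_2 □ ⋯ □ T_{2k-1}, and let t ≥ 2k. Then the fully active cop number of the t-blowup G^{(t)} is strictly greater than 2k−1 (hence equals 2k, since acop(G^{(t)}) ≤ 2·cop(G^{(t)}) = 2k). -/

import Mathlib

open SimpleGraph

universe u v

variable {V : Type u}

/-- A configuration in the game of Cops and Robbers with `n` cops:
the positions of the cops together with the position of the robber. -/
abbrev CRConfig (V : Type u) (n : ℕ) : Type u := (Fin n → V) × V

/-- A strategy for `n` cops in the *fully active* game on `G`: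
initial positions, together with a move function (which may depend on the
full history of the play and on the current configuration) under which
every cop moves to an adjacent vertex on every turn. -/
structure ActiveCopStrategy (G : SimpleGraph V) (n : ℕ) where
  init : Fin n → V
  move : List (CRConfig V n) → CRConfig V n → Fin n → V
  move_adj : ∀ h c i, G.Adj (c.1 i) (move h c i)

/-- A strategy for the robber in the *fully active* game on `G`:
an initial position (chosen knowing the cops' initial positions),
together with a move function (which may depend on the full history and on
the current configuration, whose first component records the cops' newly
chosen positions) under which the robber moves to an adjacent vertex on
every turn. -/
structure ActiveRobberStrategy (G : SimpleGraph V) (n : ℕ) where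
  init : (Fin n → V) → V
  move : List (CRConfig V n) → CRConfig V n → V
  move_adj : ∀ h c, G.Adj c.2 (move h c)

/-- A strategy for `n` cops in the *passive* (classical) game on `G`:
on her turn, each cop either moves to an adjacent vertex or stays put. -/
structure PassiveCopStrategy (G : SimpleGraph V) (n : ℕ) where
  init : Fin n → V
  move : List (CRConfig V n) → CRConfig V n → Fin n → V
  move_adj : ∀ h c i, G.Adj (c.1 i) (move h c i) ∨ move h c i = c.1 i

/-- A strategy for the robber in the *passive* (classical) game on `G`:
on his turn the robber either moves to an adjacent vertex or stays put. -/
structure PassiveRobberStrategy (G : SimpleGraph V) (n : ℕ) where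
  init : (Fin n → V) → V
  move : List (CRConfig V n) → CRConfig V n → V
  move_adj : ∀ h c, G.Adj c.2 (move h c) ∨ move h c = c.2

/-- The play determined by (the data of) a cop strategy and a robber strategy:
`crPlay n cinit rinit cmove rmove t` is the pair consisting of the history of
configurations strictly before round `t` and the configuration after round `t`
(a round consists of a cop move followed by a robber move; round `0` is the
initial placement, cops first, then the robber). -/
def crPlay (n : ℕ) (cinit : Fin n → V) (rinit : (Fin n → V) → V)
    (cmove : List (CRConfig V n) → CRConfig V n → Fin n → V)
    (rmove : List (CRConfig V n) → CRConfig V n → V) :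
    ℕ → List (CRConfig V n) × CRConfig V n
  | 0 => ([], (cinit, rinit cinit))
  | t + 1 =>
      let p := crPlay n cinit rinit cmove rmove t
      let c' := cmove p.1 p.2
      (p.1 ++ [p.2], (c', rmove p.1 (c', p.2.2)))

/-- The cops capture the robber in the given play: at some point of the play
(either right after a robber move, or right after a cop move) some cop
occupies the robber's vertex. -/
def crCaptures (n : ℕ) (cinit : Fin n → V) (rinit : (Fin n → V) → V)
    (cmove : List (CRConfig V n) → CRConfig V n → Fin n → V)
    (rmove : List (CRConfig V n) → CRConfig V n → V) : Prop :=
  ∃ t : ℕ,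
    (∃ i, (crPlay n cinit rinit cmove rmove t).2.1 i
        = (crPlay n cinit rinit cmove rmove t).2.2) ∨
    (∃ i, cmove (crPlay n cinit rinit cmove rmove t).1
            (crPlay n cinit rinit cmove rmove t).2 i
        = (crPlay n cinit rinit cmove rmove t).2.2)

/-- In the fully active game, the given cop strategy captures the robber
playing the given strategy. -/
def ActiveCapture {G : SimpleGraph V} {n : ℕ} (cs : ActiveCopStrategy G n)
    (rs : ActiveRobberStrategy G n) : Prop :=
  crCaptures n cs.init rs.init cs.move rs.move

/-- In the passive game, the given cop strategy captures the robber
playing the given strategy. -/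
def PassiveCapture {G : SimpleGraph V} {n : ℕ} (cs : PassiveCopStrategy G n)
    (rs : PassiveRobberStrategy G n) : Prop :=
  crCaptures n cs.init rs.init cs.move rs.move

/-- `n` cops have a winning strategy in the fully active game on `G`. -/
def ActiveCopsWin (G : SimpleGraph V) (n : ℕ) : Prop :=
  ∃ cs : ActiveCopStrategy G n, ∀ rs : ActiveRobberStrategy G n, ActiveCapture cs rs

/-- `n` cops have a winning strategy in the passive (classical) game on `G`. -/
def PassiveCopsWin (G : SimpleGraph V) (n : ℕ) : Prop :=
  ∃ cs : PassiveCopStrategy G n, ∀ rs : PassiveRobberStrategy G n, PassiveCapture cs rs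

/-- The fully active cop number of `G`. -/
noncomputable def acop (G : SimpleGraph V) : ℕ := sInf {n | ActiveCopsWin G n}

/-- The (classical, passive) cop number of `G`. -/
noncomputable def copNumber (G : SimpleGraph V) : ℕ := sInf {n | PassiveCopsWin G n}
/-- The Cartesian (box) product of a family of graphs: two tuples are adjacent
iff they differ in exactly one coordinate, in which they are adjacent in the
corresponding factor. -/
def piBox {ι : Type v} {W : ι → Type u} (G : ∀ i, SimpleGraph (W i)) :
    SimpleGraph (∀ i, W i) where
  Adj x y := ∃ i, (G i).Adj (x i) (y i) ∧ ∀ j, j ≠ i → x j = y j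
  symm := ⟨by
    rintro x y ⟨i, hadj, heq⟩
    exact ⟨i, hadj.symm, fun j hj => (heq j hj).symm⟩⟩
  loopless := ⟨by
    rintro x ⟨i, hadj, -⟩
    exact (G i).irrefl hadj⟩
/-- The `t`-blowup of `G`: each vertex is replaced by an independent set of
`t` copies, and each edge by a complete bipartite graph between the
corresponding sets. -/
def blowup {W : Type u} (G : SimpleGraph W) (t : ℕ) : SimpleGraph (W × Fin t) where
  Adj a b := G.Adj a.1 b.1
  symm := ⟨fun _ _ h => G.adj_symm h⟩
  loopless := ⟨fun a h => G.irrefl h⟩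

/-!
The factors are trees, so the box product is bipartite and, since both players move in every
round, the parity of the distance between a cop and the robber never changes. A cop can step onto
the robber only from odd distance, so only the cops at odd distance are dangerous; the robber
never steps onto a cop, as he always moves to a copy of his new vertex that no cop occupies, which
is possible as `t ≥ 2k`.

Against at most `2k - 1` cops the robber picks the colour class of at least half of them, so
at most `k - 1` cops are dangerous. He starts at distance at least `3` from each of them, using
two private coordinates per dangerous cop and one spare coordinate to fix the parity. Whenever
dangerous cops come to distance `2`, together they differ from him in at most `2k - 2` of the
`2k - 1` coordinates, and he steps along a coordinate in which they all agree with him.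

Conversely, `2k` cops start at the two ends of an edge, so `k` of them are at odd distance from
the robber, and each of these owns two coordinates. They always step towards the robber, never
reaching him in a coordinate they own. Their total distance to the robber, and then the depths of
the trees beyond the robber as seen from the owners of the coordinates, decrease lexicographically
in every round, so the robber is caught.
-/

open Finset

section Game

variable {G : SimpleGraph V} {n : ℕ}

open Classical in
noncomputable def SimpleGraph.preferredStep (hG : ∀ v, ∃ w, G.Adj v w) (P : V → Prop) (v : V) :
    V :=
  if h : ∃ w, G.Adj v w ∧ P w then h.choose else (hG v).choose

lemma SimpleGraph.adj_preferredStep (hG : ∀ v, ∃ w, G.Adj v w) (P : V → Prop) (v : V) :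
    G.Adj v (G.preferredStep hG P v) := by
  unfold preferredStep
  split_ifs with h
  exacts [h.choose_spec.1, (hG v).choose_spec]

lemma SimpleGraph.preferredStep_spec (hG : ∀ v, ∃ w, G.Adj v w) {P : V → Prop} {v : V}
    (h : ∃ w, G.Adj v w ∧ P w) : P (G.preferredStep hG P v) := by
  rw [preferredStep, dif_pos h]
  exact h.choose_spec.2

theorem not_activeCopsWin_of_safe (hG : ∀ v, ∃ w, G.Adj v w) (Safe : CRConfig V n → Prop)
    (hinit : ∀ cops, ∃ r, Safe (cops, r)) (hsafe : ∀ c, Safe c → ∀ j, c.1 j ≠ c.2)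
    (hstep : ∀ cops r cops', Safe (cops, r) → (∀ j, G.Adj (cops j) (cops' j)) →
      (∀ j, cops' j ≠ r) ∧ ∃ r', G.Adj r r' ∧ Safe (cops', r')) :
    ¬ ActiveCopsWin G n := by
  classical
  rintro ⟨cs, hcs⟩
  let rs : ActiveRobberStrategy G n :=
    { init := fun cops => (hinit cops).choose
      move := fun _ c => G.preferredStep hG (fun r' => Safe (c.1, r')) c.2
      move_adj := fun _ c => G.adj_preferredStep hG _ c.2 }
  have hplay : ∀ τ, Safe (crPlay n cs.init rs.init cs.move rs.move τ).2 := by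
    intro τ
    induction τ with
    | zero => exact (hinit cs.init).choose_spec
    | succ τ ih =>
      exact G.preferredStep_spec hG (hstep _ _ _ ih (cs.move_adj _ _)).2
  obtain ⟨τ, ⟨j, hj⟩ | ⟨j, hj⟩⟩ := hcs rs
  · exact hsafe _ (hplay τ) j hj
  · exact (hstep _ _ _ (hplay τ) (cs.move_adj _ _)).1 j hj

theorem activeCopsWin_of_potential {α : Type*} (init : Fin n → V)
    (move : CRConfig V n → Fin n → V) (hmove : ∀ c j, G.Adj (c.1 j) (move c j))
    (Inv : α → CRConfig V n → Prop) (Φ : α → CRConfig V n → ℕ)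
    (hinit : ∀ r, ∃ a, Inv a (init, r))
    (hstep : ∀ a c r', Inv a c → (∀ j, move c j ≠ c.2) → G.Adj c.2 r' →
      Inv a (move c, r') ∧ Φ a (move c, r') < Φ a c) :
    ActiveCopsWin G n := by
  refine ⟨⟨init, fun _ c => move c, fun _ c => hmove c⟩, fun rs => ?_⟩
  by_contra hfree
  simp only [ActiveCapture, crCaptures, not_exists, not_or] at hfree
  set P := crPlay n init rs.init (fun _ c => move c) rs.move
  obtain ⟨a, ha⟩ := hinit (rs.init init)
  have hdescent : ∀ τ, Inv a (P τ).2 ∧ Φ a (P τ).2 + τ ≤ Φ a (P 0).2 := by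
    intro τ
    induction τ with
    | zero => exact ⟨ha, le_rfl⟩
    | succ τ ih =>
      have hround : (P (τ + 1)).2 = (move (P τ).2, rs.move (P τ).1 (move (P τ).2, (P τ).2.2)) :=
        rfl
      obtain ⟨hinv, hlt⟩ :=
        hstep a _ _ ih.1 (hfree τ).2 (rs.move_adj (P τ).1 (move (P τ).2, (P τ).2.2))
      rw [hround]
      exact ⟨hinv, by omega⟩
  have := (hdescent (Φ a (P 0).2 + 1)).2
  omega

lemma acop_eq_of_activeCopsWin (hwin : ActiveCopsWin G n)
    (hlose : ∀ m < n, ¬ ActiveCopsWin G m) : acop G = n :=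
  le_antisymm (Nat.sInf_le hwin) (le_csInf ⟨n, hwin⟩ fun m hm => not_lt.mp fun h => hlose m h hm)

end Game

namespace SimpleGraph

variable {G : SimpleGraph V}

lemma Connected.exists_adj_dist_lt (hG : G.Connected) {u v : V} (h : u ≠ v) :
    ∃ w, G.Adj u w ∧ G.dist w v < G.dist u v := by
  obtain ⟨p, -, hp⟩ := hG.exists_path_of_dist u v
  have hnil : ¬ p.Nil := p.not_nil_of_ne h
  refine ⟨p.snd, p.adj_snd hnil, ?_⟩
  have := dist_le p.tail
  have := p.length_tail_add_one hnil
  omega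

lemma IsTree.dist_mod_two (hG : G.IsTree) (u v w : V) :
    G.dist u v % 2 = (G.dist w u + G.dist w v) % 2 := by
  obtain ⟨p⟩ := hG.connected.preconnected u v
  induction p with
  | nil => simp only [dist_self]; omega
  | @cons a b c h q ih =>
    have h1 := hG.dist_eq_dist_add_one_of_adj c h
    have h2 := hG.dist_eq_dist_add_one_of_adj w h
    rw [dist_comm (u := c), dist_comm (u := c)] at h1
    omega

lemma IsTree.dist_add_one_eq_of_adj {c c' r : V} (hG : G.IsTree) (hadj : G.Adj c c')
    (hc' : G.dist c' r < G.dist c r) : G.dist c' r + 1 = G.dist c r := by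
  have := hG.dist_eq_dist_add_one_of_adj r hadj
  rw [dist_comm (u := r), dist_comm (u := r)] at this
  omega

/-- Seen from `c`, the vertices beyond `r` stay beyond `r` when `c` steps towards `r`. -/
lemma IsTree.dist_eq_add_of_adj (hG : G.IsTree) {c c' r x : V} (hadj : G.Adj c c')
    (hc' : G.dist c' r < G.dist c r) (hne : c' ≠ r)
    (hx : G.dist c' x = G.dist c' r + G.dist r x) : G.dist c x = G.dist c r + G.dist r x := by
  have hcr := hG.dist_add_one_eq_of_adj hadj hc'
  rcases hG.dist_eq_dist_add_one_of_adj x hadj with h | h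
  · rw [dist_comm (u := x), dist_comm (u := x)] at h
    omega
  exfalso
  rw [dist_comm (u := x), dist_comm (u := x)] at h
  obtain ⟨p, -, hp⟩ := hG.connected.exists_path_of_dist c x
  obtain ⟨q, -, hq⟩ := hG.connected.exists_path_of_dist c' r
  obtain ⟨s, -, hs⟩ := hG.connected.exists_path_of_dist r x
  -- Both walks from `c'` to `x` are geodesics, hence the same path.
  have hsame : Walk.cons hadj.symm p = q.append s := by
    have h₁ := (Walk.cons hadj.symm p).isPath_of_length_eq_dist
      (by simp only [Walk.length_cons]; omega)
    have h₂ := (q.append s).isPath_of_length_eq_dist (by simp only [Walk.length_append]; omega)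
    exact Subtype.mk.inj <| hG.isAcyclic.subsingleton_path c' x |>.elim ⟨_, h₁⟩ ⟨_, h₂⟩
  cases q with
  | nil => exact hne rfl
  | cons hq' q' =>
    simp only [Walk.cons_append] at hsame
    obtain ⟨rfl, -⟩ := Walk.cons.inj hsame
    have := dist_le q'
    simp only [Walk.length_cons] at hq
    omega

open Classical in
/-- In a tree, the height of the branch at `r` pointing away from `c`. -/
noncomputable def depthBeyond [Fintype V] (G : SimpleGraph V) (c r : V) : ℕ :=
  ({x | G.dist c x = G.dist c r + G.dist r x} : Finset V).sup (G.dist r)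

variable [Fintype V]

lemma dist_le_depthBeyond {c r x : V} (hx : G.dist c x = G.dist c r + G.dist r x) :
    G.dist r x ≤ G.depthBeyond c r := by
  classical
  exact le_sup (f := G.dist r) (by simpa using hx)

lemma Connected.depthBeyond_add_one_le (hG : G.Connected) {c r w : V} (hadj : G.Adj r w)
    (hw : G.dist c w = G.dist c r + 1) : G.depthBeyond c w + 1 ≤ G.depthBeyond c r := by
  classical
  have hrw : G.dist r w = 1 := dist_eq_one_iff_adj.mpr hadj
  have hw_beyond :=
    dist_le_depthBeyond (G := G) (show G.dist c w = G.dist c r + G.dist r w by omega)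
  suffices G.depthBeyond c w ≤ G.depthBeyond c r - 1 by omega
  refine Finset.sup_le fun x hx => ?_
  replace hx : G.dist c x = G.dist c w + G.dist w x := by simpa using hx
  have h₁ : G.dist r x ≤ G.dist r w + G.dist w x := hG.dist_triangle
  have h₂ : G.dist c x ≤ G.dist c r + G.dist r x := hG.dist_triangle
  have := dist_le_depthBeyond (G := G) (show G.dist c x = G.dist c r + G.dist r x by omega)
  omega

lemma IsTree.depthBeyond_le (hG : G.IsTree) {c c' r : V} (hadj : G.Adj c c')
    (hc' : G.dist c' r < G.dist c r) (hne : c' ≠ r) : G.depthBeyond c' r ≤ G.depthBeyond c r := by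
  classical
  exact Finset.sup_le fun x hx =>
    dist_le_depthBeyond (hG.dist_eq_add_of_adj hadj hc' hne (by simpa using hx))

end SimpleGraph

section PiBox

variable {ι : Type*} {W : ι → Type*} {T : ∀ i, SimpleGraph (W i)}

lemma piBox_adj_update [DecidableEq ι] {x : ∀ i, W i} {i : ι} {w : W i}
    (h : (T i).Adj (x i) w) : (piBox T).Adj x (Function.update x i w) :=
  ⟨i, by rwa [Function.update_self], fun _ hj => (Function.update_of_ne hj _ _).symm⟩

lemma piBox_adj_iff [DecidableEq ι] {x y : ∀ i, W i} :
    (piBox T).Adj x y ↔ ∃ i, (T i).Adj (x i) (y i) ∧ y = Function.update x i (y i) := by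
  refine ⟨fun ⟨i, hadj, heq⟩ => ⟨i, hadj, funext fun j => ?_⟩, fun ⟨i, hadj, hy⟩ => ?_⟩
  · by_cases hj : j = i
    · subst hj; simp
    · rw [Function.update_of_ne hj, heq j hj]
  · rw [hy]; exact piBox_adj_update hadj

lemma exists_piBox_adj [Nonempty ι] [∀ i, Nontrivial (W i)] (hT : ∀ i, (T i).Connected)
    (x : ∀ i, W i) : ∃ y, (piBox T).Adj x y := by
  classical
  obtain ⟨w, hw⟩ := (hT (Classical.arbitrary ι)).preconnected.exists_adj_of_nontrivial (x _)
  exact ⟨_, piBox_adj_update hw⟩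

variable [Fintype ι]

variable (T) in
noncomputable def piDist (x y : ∀ i, W i) : ℕ := ∑ i, (T i).dist (x i) (y i)

lemma piDist_comm (x y : ∀ i, W i) : piDist T x y = piDist T y x :=
  sum_congr rfl fun _ _ => dist_comm

variable (T) in
lemma piDist_update_right [DecidableEq ι] (x r : ∀ i, W i) (i : ι) (w : W i) :
    piDist T x (Function.update r i w) + (T i).dist (x i) (r i)
      = piDist T x r + (T i).dist (x i) w := by
  simp only [piDist, ← add_sum_erase _ _ (mem_univ i), Function.update_self]
  rw [sum_congr rfl fun j hj => by rw [Function.update_of_ne (ne_of_mem_erase hj)]]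
  ring

variable (T) in
lemma piDist_update_left [DecidableEq ι] (x r : ∀ i, W i) (i : ι) (w : W i) :
    piDist T (Function.update x i w) r + (T i).dist (x i) (r i)
      = piDist T x r + (T i).dist w (r i) := by
  rw [piDist_comm, piDist_comm x, dist_comm (u := x i), dist_comm (u := w)]
  exact piDist_update_right T r x i w

lemma card_dist_ne_zero_le_piDist (x y : ∀ i, W i) :
    #{i | (T i).dist (x i) (y i) ≠ 0} ≤ piDist T x y := by
  rw [card_eq_sum_ones, sum_filter]
  exact sum_le_sum fun i _ => by split_ifs <;> omega

lemma piBox_adj_of_piDist_eq_one (hT : ∀ i, (T i).Connected) {x y : ∀ i, W i}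
    (h : piDist T x y = 1) : (piBox T).Adj x y := by
  classical
  obtain ⟨i, -, hi⟩ := exists_ne_zero_of_sum_ne_zero (s := univ)
    (f := fun i => (T i).dist (x i) (y i)) (by rw [← piDist, h]; simp)
  have hsplit := add_sum_erase univ (fun i => (T i).dist (x i) (y i)) (mem_univ i)
  rw [← piDist, h] at hsplit
  refine ⟨i, dist_eq_one_iff_adj.mp (by omega), fun j hj => ?_⟩
  have hzero : ∑ j ∈ univ.erase i, (T j).dist (x j) (y j) = 0 := by omega
  exact (hT j).dist_eq_zero_iff.mp (sum_eq_zero_iff.mp hzero j (mem_erase.mpr ⟨hj, mem_univ j⟩))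

lemma piDist_eq_add_one_of_adj (hT : ∀ i, (T i).IsTree) {y y' : ∀ i, W i}
    (h : (piBox T).Adj y y') (x : ∀ i, W i) :
    piDist T x y' = piDist T x y + 1 ∨ piDist T x y = piDist T x y' + 1 := by
  classical
  obtain ⟨i, hadj, hy'⟩ := piBox_adj_iff.mp h
  have := piDist_update_right T x y i (y' i)
  have := (hT i).dist_eq_dist_add_one_of_adj (x i) hadj
  rw [← hy'] at *
  omega

lemma piDist_mod_two (hT : ∀ i, (T i).IsTree) (x y b : ∀ i, W i) :
    piDist T x y % 2 = (piDist T b x + piDist T b y) % 2 := by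
  rw [piDist, piDist, piDist, ← sum_add_distrib, sum_nat_mod,
    sum_congr rfl fun i _ => (hT i).dist_mod_two (x i) (y i) (b i), ← sum_nat_mod]

lemma piDist_mod_two_of_adj_of_adj (hT : ∀ i, (T i).IsTree) {x x' y y' : ∀ i, W i}
    (hx : (piBox T).Adj x x') (hy : (piBox T).Adj y y') :
    piDist T x' y' % 2 = piDist T x y % 2 := by
  have h₁ := piDist_eq_add_one_of_adj hT hy x'
  have h₂ := piDist_eq_add_one_of_adj hT hx y
  rw [piDist_comm y, piDist_comm y] at h₂
  omega

end PiBox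

lemma exists_blowup_adj {W : Type*} {G : SimpleGraph W} (hG : ∀ v, ∃ w, G.Adj v w) (t : ℕ)
    (a : W × Fin t) : ∃ b, (blowup G t).Adj a b :=
  ⟨((hG a.1).choose, a.2), (hG a.1).choose_spec⟩

lemma Fin.exists_forall_ne_of_lt {n t : ℕ} (ht : n < t) (f : Fin n → Fin t) :
    ∃ a, ∀ j, f j ≠ a := by
  by_contra! h
  have := Fintype.card_le_of_surjective f fun a => (h a)
  simp only [Fintype.card_fin] at this
  omega

section Robber

variable {ι : Type*} [Fintype ι] {W : ι → Type*} {T : ∀ i, SimpleGraph (W i)}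

variable (T) in
def RobberSafe {n t : ℕ} (c : CRConfig ((∀ i, W i) × Fin t) n) : Prop :=
  2 * #{j | piDist T (c.1 j).1 c.2.1 % 2 = 1} < Fintype.card ι ∧
  (∀ j, piDist T (c.1 j).1 c.2.1 % 2 = 1 → 3 ≤ piDist T (c.1 j).1 c.2.1) ∧
  ∀ j, (c.1 j).2 ≠ c.2.2

variable [DecidableEq ι] {κ : Type*}

lemma exists_forall_eq_of_piDist_le_two (hT : ∀ i, (T i).Connected) (C : Finset κ)
    (x : κ → ∀ i, W i) (r : ∀ i, W i) (hC : ∀ j ∈ C, piDist T (x j) r ≤ 2)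
    (h : 2 * #C < Fintype.card ι) : ∃ i₀, ∀ j ∈ C, x j i₀ = r i₀ := by
  let S := C.biUnion fun j => {i | (T i).dist (x j i) (r i) ≠ 0}
  have hS : #S < #(univ : Finset ι) := calc
    #S ≤ ∑ j ∈ C, #{i | (T i).dist (x j i) (r i) ≠ 0} := card_biUnion_le
    _ ≤ ∑ _j ∈ C, 2 := sum_le_sum fun j hj => (card_dist_ne_zero_le_piDist _ _).trans (hC j hj)
    _ < #(univ : Finset ι) := by rw [sum_const, smul_eq_mul, card_univ]; omega
  obtain ⟨i₀, -, hi₀⟩ := exists_mem_notMem_of_card_lt_card hS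
  refine ⟨i₀, fun j hj => (hT i₀).dist_eq_zero_iff.mp ?_⟩
  by_contra hne
  exact hi₀ (mem_biUnion.mpr ⟨j, hj, by simpa using hne⟩)

variable [∀ i, Nontrivial (W i)]

/-- Each `x j` with `j ∈ M` gets two private coordinates in which `r` differs from it, and the
coordinate `i₁` stays free. -/
lemma exists_two_le_piDist_update (hT : ∀ i, (T i).Connected) (M : Finset κ)
    (x : κ → ∀ i, W i) (hM : 2 * #M < Fintype.card ι) :
    ∃ (r : ∀ i, W i) (i₁ : ι), ∀ j ∈ M, ∀ w, 2 ≤ piDist T (x j) (Function.update r i₁ w) := by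
  classical
  obtain ⟨e⟩ : Nonempty (Option (M × Fin 2) ↪ ι) :=
    Function.Embedding.nonempty_of_card_le (by
      simp only [Fintype.card_option, Fintype.card_prod, Fintype.card_coe, Fintype.card_fin]
      omega)
  let r : ∀ i, W i := fun i =>
    match Function.invFun e i with
    | some p => (exists_ne (x p.1 i)).choose
    | none => Classical.arbitrary _
  refine ⟨r, e none, fun j hj w => ?_⟩
  let i (a : Fin 2) : ι := e (some (⟨j, hj⟩, a))
  have hpos (a : Fin 2) :
      1 ≤ (T (i a)).dist (x j (i a)) (Function.update r (e none) w (i a)) := by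
    rw [Function.update_of_ne (e.injective.ne (Option.some_ne_none _))]
    apply (hT _).pos_dist_of_ne
    simp only [i, r, Function.leftInverse_invFun e.injective _]
    exact (exists_ne _).choose_spec.symm
  have := add_le_sum (f := fun i => (T i).dist (x j i) (Function.update r (e none) w i))
    (fun _ _ => Nat.zero_le _) (mem_univ (i 0)) (mem_univ (i 1)) (e.injective.ne (by simp))
  have := hpos 0
  have := hpos 1
  unfold piDist
  omega

lemma exists_piDist_mod_two_eq_and_two_le (hT : ∀ i, (T i).IsTree) (M : Finset κ)
    (x : κ → ∀ i, W i) (hM : 2 * #M < Fintype.card ι) (b : ∀ i, W i) {q : ℕ} (hq : q < 2) :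
    ∃ r, piDist T b r % 2 = q ∧ ∀ j ∈ M, 2 ≤ piDist T (x j) r := by
  obtain ⟨r, i₁, hr⟩ := exists_two_le_piDist_update (fun i => (hT i).connected) M x hM
  obtain ⟨w, hw⟩ := (hT i₁).connected.preconnected.exists_adj_of_nontrivial (r i₁)
  have := piDist_eq_add_one_of_adj hT (piBox_adj_update hw) b
  by_cases h : piDist T b r % 2 = q
  · exact ⟨r, h, fun j hj => by simpa using hr j hj (r i₁)⟩
  · exact ⟨_, by omega, fun j hj => hr j hj w⟩

variable {n t : ℕ}

lemma exists_robberSafe (hT : ∀ i, (T i).IsTree) (hn : 2 * (n / 2) < Fintype.card ι)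
    (ht : n < t) (cops : Fin n → (∀ i, W i) × Fin t) : ∃ r, RobberSafe T (cops, r) := by
  classical
  let b : ∀ i, W i := fun _ => Classical.arbitrary _
  -- `piDist T b · % 2` is a proper 2-colouring; the robber takes the colour `q` of at least half
  -- of the cops.
  obtain ⟨q, hq, hM⟩ : ∃ q < 2, #{j | piDist T b (cops j).1 % 2 ≠ q} ≤ n / 2 := by
    have hsplit := card_filter_add_card_filter_not (s := univ)
      fun j => piDist T b (cops j).1 % 2 = 1
    simp only [card_univ, Fintype.card_fin] at hsplit
    by_cases h : #{j | piDist T b (cops j).1 % 2 = 1} ≤ n / 2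
    · exact ⟨0, by omega, by convert h using 4; omega⟩
    · refine ⟨1, by omega, ?_⟩
      simp only [ne_eq]
      omega
  obtain ⟨r, hr, hfar⟩ := exists_piDist_mod_two_eq_and_two_le hT
    {j | piDist T b (cops j).1 % 2 ≠ q} (fun j => (cops j).1) (by omega) b hq
  obtain ⟨cp, hcp⟩ := Fin.exists_forall_ne_of_lt ht fun j => (cops j).2
  have hodd (j : Fin n) : piDist T (cops j).1 r % 2 = 1 ↔ piDist T b (cops j).1 % 2 ≠ q := by
    have := piDist_mod_two hT (cops j).1 r b
    omega
  refine ⟨(r, cp), ?_, fun j hj => ?_, hcp⟩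
  · simp only [hodd]
    omega
  · dsimp only at hj ⊢
    have := hfar j (by simpa [← hodd] using hj)
    omega

lemma robberSafe_step (hT : ∀ i, (T i).IsTree) (ht : n < t)
    {cops cops' : Fin n → (∀ i, W i) × Fin t} {r : (∀ i, W i) × Fin t}
    (hsafe : RobberSafe T (cops, r)) (hmove : ∀ j, (blowup (piBox T) t).Adj (cops j) (cops' j)) :
    (∀ j, cops' j ≠ r) ∧ ∃ r', (blowup (piBox T) t).Adj r r' ∧ RobberSafe T (cops', r') := by
  classical
  dsimp only [RobberSafe] at hsafe
  obtain ⟨hcard, hfar, -⟩ := hsafe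
  have hstep (j : Fin n) := piDist_eq_add_one_of_adj hT (hmove j) r.1
  simp only [piDist_comm r.1] at hstep
  have hpos (j : Fin n) : 0 < piDist T (cops' j).1 r.1 := by
    have := hfar j
    have := hstep j
    omega
  refine ⟨fun j hj => (hpos j).ne' ?_, ?_⟩
  · simp [hj, piDist]
  -- Cops now at distance `2` were at odd distance; the robber steps in a coordinate they share.
  let C : Finset (Fin n) := {j | piDist T (cops' j).1 r.1 = 2}
  have hC : #C ≤ #{j | piDist T (cops j).1 r.1 % 2 = 1} :=
    card_le_card fun j hj => by
      have := hstep j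
      simp only [C, mem_filter, mem_univ, true_and] at hj ⊢
      omega
  obtain ⟨i₀, hi₀⟩ := exists_forall_eq_of_piDist_le_two (fun i => (hT i).connected) C
    (fun j => (cops' j).1) r.1 (fun j hj => by simp only [C, mem_filter] at hj; omega) (by omega)
  obtain ⟨w, hw⟩ := (hT i₀).connected.preconnected.exists_adj_of_nontrivial (r.1 i₀)
  obtain ⟨cp, hcp⟩ := Fin.exists_forall_ne_of_lt ht fun j => (cops' j).2
  have hrobber : (piBox T).Adj r.1 (Function.update r.1 i₀ w) := piBox_adj_update hw
  have hparity (j : Fin n) := piDist_mod_two_of_adj_of_adj hT (hmove j) hrobber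
  refine ⟨(Function.update r.1 i₀ w, cp), hrobber, ?_, fun j hj => ?_, hcp⟩
  · dsimp only
    simp only [hparity]
    exact hcard
  · dsimp only at hj ⊢
    rw [hparity] at hj
    have := hfar j hj
    have := hstep j
    have := piDist_eq_add_one_of_adj hT hrobber (cops' j).1
    by_cases hcrit : j ∈ C
    · have := piDist_update_right T (cops' j).1 r.1 i₀ w
      rw [hi₀ j hcrit, dist_self, dist_eq_one_iff_adj.mpr hw] at this
      simp only [C, mem_filter, mem_univ, true_and] at hcrit
      omega
    · simp only [C, mem_filter, mem_univ, true_and] at hcrit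
      omega

theorem not_activeCopsWin_blowup_piBox (hT : ∀ i, (T i).IsTree)
    (hn : 2 * (n / 2) < Fintype.card ι) (ht : n < t) : ¬ ActiveCopsWin (blowup (piBox T) t) n :=
  have : Nonempty ι := Fintype.card_pos_iff.mp (by omega)
  not_activeCopsWin_of_safe (exists_blowup_adj (exists_piBox_adj fun i => (hT i).connected) t)
    (RobberSafe T) (exists_robberSafe hT hn ht) (fun _ h j hj => h.2.2 j (congrArg Prod.snd hj))
    fun _ _ _ h hmove => robberSafe_step hT ht h hmove

end Robber

lemma lex_potential_lt {ι : Type*} [Fintype ι] {a a' p p' : ι → ℕ} {Λ : ℕ} (s : ι)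
    (ha : ∀ i, a' i ≤ a i) (hp : ∀ i, i ≠ s → p' i ≤ p i) (hΛ : p' s < Λ)
    (hs : p' s < p s ∨ a' s + 2 ≤ a s) :
    Λ * ∑ i, a' i + ∑ i, p' i < Λ * ∑ i, a i + ∑ i, p i := by
  classical
  have hrest : ∑ i ∈ univ.erase s, p' i ≤ ∑ i ∈ univ.erase s, p i :=
    sum_le_sum fun i hi => hp i (ne_of_mem_erase hi)
  rw [← add_sum_erase _ p (mem_univ s), ← add_sum_erase _ p' (mem_univ s)]
  rcases hs with hs | hs
  · have := Nat.mul_le_mul_left Λ (sum_le_sum fun i (_ : i ∈ univ) => ha i)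
    omega
  · have hsum : ∑ i, a' i + 2 ≤ ∑ i, a i := by
      rw [← add_sum_erase _ a (mem_univ s), ← add_sum_erase _ a' (mem_univ s)]
      have := sum_le_sum fun i (_ : i ∈ univ.erase s) => ha i
      omega
    have := Nat.mul_le_mul_left Λ hsum
    rw [mul_add] at this
    omega

section Cops

variable {m k t : ℕ} {W : Fin m → Type*} {T : ∀ i, SimpleGraph (W i)}

variable (T) in
/-- The coordinates `i` with `i / 2 = a` are those owned by the cops `j` with `j % k = a`. -/
def IsApproach (a : ℕ) (x r y : ∀ i, W i) : Prop :=
  ∃ i w, (T i).Adj (x i) w ∧ (T i).dist w (r i) < (T i).dist (x i) (r i) ∧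
    ((i : ℕ) / 2 = a → w ≠ r i) ∧ y = Function.update x i w

lemma Fin.card_filter_div_two_eq_le (a : ℕ) : #{i : Fin m | (i : ℕ) / 2 = a} ≤ 2 := by
  rw [← card_map Fin.valEmbedding]
  refine (card_le_card fun n hn => ?_).trans (card_le_two (a := 2 * a) (b := 2 * a + 1))
  obtain ⟨i, hi, rfl⟩ := mem_map.mp hn
  simp only [mem_filter, mem_univ, true_and] at hi
  simp only [Fin.valEmbedding_apply, mem_insert, mem_singleton]
  omega

lemma exists_isApproach (hT : ∀ i, (T i).Connected) (a : ℕ) {x r : ∀ i, W i}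
    (h : 3 ≤ piDist T x r) : ∃ y, IsApproach T a x r y := by
  obtain ⟨i, hne, hown⟩ : ∃ i, x i ≠ r i ∧ ((i : ℕ) / 2 = a → 2 ≤ (T i).dist (x i) (r i)) := by
    by_contra! hno
    have : piDist T x r ≤ #{i : Fin m | (i : ℕ) / 2 = a} := by
      rw [card_filter]
      refine sum_le_sum fun i _ => ?_
      by_cases hxr : x i = r i
      · simp [hxr]
      · have := hno i hxr
        split_ifs <;> omega
    have := Fin.card_filter_div_two_eq_le (m := m) a
    omega
  obtain ⟨w, hw, hlt⟩ := (hT i).exists_adj_dist_lt hne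
  refine ⟨_, i, w, hw, hlt, fun hi hwr => ?_, rfl⟩
  have := hown hi
  rw [dist_eq_one_iff_adj.mpr (hwr ▸ hw)] at this
  omega

namespace IsApproach

variable {a : ℕ} {x r y : ∀ i, W i}

lemma piBox_adj (h : IsApproach T a x r y) : (piBox T).Adj x y := by
  obtain ⟨i, w, hw, -, -, rfl⟩ := h
  exact piBox_adj_update hw

lemma piDist_add_one (hT : ∀ i, (T i).IsTree) (h : IsApproach T a x r y) :
    piDist T y r + 1 = piDist T x r := by
  obtain ⟨i, w, hw, hlt, -, rfl⟩ := h
  have := piDist_update_left T x r i w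
  have := (hT i).dist_add_one_eq_of_adj hw hlt
  omega

lemma depthBeyond_le [∀ i, Fintype (W i)] (hT : ∀ i, (T i).IsTree) (h : IsApproach T a x r y)
    {i : Fin m} (hi : (i : ℕ) / 2 = a) :
    (T i).depthBeyond (y i) (r i) ≤ (T i).depthBeyond (x i) (r i) := by
  obtain ⟨i₀, w, hw, hlt, hown, rfl⟩ := h
  by_cases hii : i = i₀
  · subst hii
    rw [Function.update_self]
    exact (hT i).depthBeyond_le hw hlt (hown hi)
  · rw [Function.update_of_ne hii]

end IsApproach

variable (T) in
noncomputable def copMove (hG : ∀ v, ∃ w, (blowup (piBox T) t).Adj v w)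
    (c : CRConfig ((∀ i, W i) × Fin t) (2 * k)) (j : Fin (2 * k)) : (∀ i, W i) × Fin t :=
  (blowup (piBox T) t).preferredStep hG
    (fun y => y = c.2 ∨
      ¬ (piBox T).Adj (c.1 j).1 c.2.1 ∧ IsApproach T (j % k) (c.1 j).1 c.2.1 y.1)
    (c.1 j)

variable (hG : ∀ v, ∃ w, (blowup (piBox T) t).Adj v w)

lemma copMove_adj (c : CRConfig ((∀ i, W i) × Fin t) (2 * k)) (j : Fin (2 * k)) :
    (blowup (piBox T) t).Adj (c.1 j) (copMove T hG c j) :=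
  adj_preferredStep hG _ _

lemma copMove_spec {c : CRConfig ((∀ i, W i) × Fin t) (2 * k)} {j : Fin (2 * k)}
    {y : (∀ i, W i) × Fin t} (hadj : (piBox T).Adj (c.1 j).1 y.1)
    (hy : y = c.2 ∨ ¬ (piBox T).Adj (c.1 j).1 c.2.1 ∧ IsApproach T (j % k) (c.1 j).1 c.2.1 y.1) :
    copMove T hG c j = c.2 ∨
      ¬ (piBox T).Adj (c.1 j).1 c.2.1 ∧ IsApproach T (j % k) (c.1 j).1 c.2.1 (copMove T hG c j).1 :=
  preferredStep_spec hG (P := fun y => y = c.2 ∨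
    ¬ (piBox T).Adj (c.1 j).1 c.2.1 ∧ IsApproach T (j % k) (c.1 j).1 c.2.1 y.1) ⟨y, hadj, hy⟩

lemma isApproach_copMove (hT : ∀ i, (T i).Connected) {c : CRConfig ((∀ i, W i) × Fin t) (2 * k)}
    {j : Fin (2 * k)} (hodd : piDist T (c.1 j).1 c.2.1 % 2 = 1) (hfree : copMove T hG c j ≠ c.2) :
    IsApproach T (j % k) (c.1 j).1 c.2.1 (copMove T hG c j).1 := by
  have hnadj : ¬ (piBox T).Adj (c.1 j).1 c.2.1 := fun hadj =>
    hfree ((copMove_spec hG hadj (Or.inl rfl)).resolve_right fun h => h.1 hadj)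
  have h3 : 3 ≤ piDist T (c.1 j).1 c.2.1 := by
    have := mt (piBox_adj_of_piDist_eq_one hT) hnadj
    omega
  obtain ⟨y, hy⟩ := exists_isApproach hT (j % k) h3
  exact ((copMove_spec hG (y := (y, (c.1 j).2)) hy.piBox_adj
    (Or.inr ⟨hnadj, hy⟩)).resolve_left hfree).2

variable [∀ i, Fintype (W i)]

variable (T) in
noncomputable def depthBound : ℕ :=
  ∑ i, (univ : Finset (W i × W i)).sup fun p => (T i).depthBeyond p.1 p.2

lemma depthBeyond_le_depthBound (i : Fin m) (c r : W i) :
    (T i).depthBeyond c r ≤ depthBound T :=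
  (le_sup (f := fun p : W i × W i => (T i).depthBeyond p.1 p.2) (mem_univ (c, r))).trans
    (single_le_sum (f := fun i => (univ : Finset (W i × W i)).sup fun p =>
      (T i).depthBeyond p.1 p.2) (fun _ _ => Nat.zero_le _) (mem_univ i))

variable (T) in
def OwnersOdd (oc : Fin m → Fin (2 * k)) (c : CRConfig ((∀ i, W i) × Fin t) (2 * k)) : Prop :=
  ∀ i, (oc i : ℕ) % k = i / 2 ∧ piDist T (c.1 (oc i)).1 c.2.1 % 2 = 1

variable (T) in
/-- Lexicographic in the owners' distances to the robber and the depths of the robber beyond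
them. -/
noncomputable def ownerPotential (oc : Fin m → Fin (2 * k))
    (c : CRConfig ((∀ i, W i) × Fin t) (2 * k)) : ℕ :=
  (depthBound T + 1) * ∑ i, piDist T (c.1 (oc i)).1 c.2.1 +
    ∑ i, (T i).depthBeyond ((c.1 (oc i)).1 i) (c.2.1 i)

/-- In a round, every owner gets one step closer to the robber without increasing the depth
beyond him in her own coordinates. Then, if the robber moves away from the owner of the
coordinate he changes, that depth drops; if he moves towards her, her distance drops by `2`. -/
lemma ownersOdd_and_ownerPotential_lt (hT : ∀ i, (T i).IsTree) {oc : Fin m → Fin (2 * k)}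
    {c : CRConfig ((∀ i, W i) × Fin t) (2 * k)} {r' : (∀ i, W i) × Fin t}
    (hinv : OwnersOdd T oc c) (hfree : ∀ j, copMove T hG c j ≠ c.2)
    (hr' : (piBox T).Adj c.2.1 r'.1) :
    OwnersOdd T oc (copMove T hG c, r') ∧
      ownerPotential T oc (copMove T hG c, r') < ownerPotential T oc c := by
  have happ (i : Fin m) :
      IsApproach T (i / 2) (c.1 (oc i)).1 c.2.1 (copMove T hG c (oc i)).1 := by
    rw [← (hinv i).1]
    exact isApproach_copMove hG (fun i => (hT i).connected) (hinv i).2 (hfree _)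
  refine ⟨fun i => ⟨(hinv i).1, ?_⟩, ?_⟩
  · rw [piDist_mod_two_of_adj_of_adj hT (copMove_adj hG c (oc i)) hr']
    exact (hinv i).2
  obtain ⟨s, hs, hr'eq⟩ := piBox_adj_iff.mp hr'
  refine lex_potential_lt s (fun i => ?_) (fun i hi => ?_) (Nat.lt_succ_of_le
    (depthBeyond_le_depthBound _ _ _)) ?_
  · dsimp only
    have := (happ i).piDist_add_one hT
    have := piDist_eq_add_one_of_adj hT hr' (copMove T hG c (oc i)).1
    omega
  · dsimp only
    rw [hr'eq, Function.update_of_ne hi]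
    exact (happ i).depthBeyond_le hT rfl
  · dsimp only
    rcases (hT s).dist_eq_dist_add_one_of_adj ((copMove T hG c (oc s)).1 s) hs with h | h
    · right
      have := (happ s).piDist_add_one hT
      have := piDist_update_right T (copMove T hG c (oc s)).1 c.2.1 s (r'.1 s)
      rw [← hr'eq] at this
      omega
    · left
      have := (hT s).connected.depthBeyond_add_one_le hs h
      have := (happ s).depthBeyond_le hT rfl
      omega

end Cops

theorem activeCopsWin_blowup_piBox {m k t : ℕ} {W : Fin m → Type*} [∀ i, Fintype (W i)]
    [∀ i, Nontrivial (W i)] {T : ∀ i, SimpleGraph (W i)} (hT : ∀ i, (T i).IsTree)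
    (hm : 0 < m) (hmk : m ≤ 2 * k) (ht : 0 < t) :
    ActiveCopsWin (blowup (piBox T) t) (2 * k) := by
  have : Nonempty (Fin m) := ⟨⟨0, hm⟩⟩
  have hnbr := exists_piBox_adj fun i => (hT i).connected
  have hG := exists_blowup_adj hnbr t
  let b : ∀ i, W i := fun _ => Classical.arbitrary _
  obtain ⟨b', hbb'⟩ := hnbr b
  -- Half of the cops start at `b`, half at `b'`: one half is at odd distance from the robber.
  let init (j : Fin (2 * k)) : (∀ i, W i) × Fin t := (if (j : ℕ) < k then b else b', ⟨0, ht⟩)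
  refine activeCopsWin_of_potential init (copMove T hG) (copMove_adj hG) (OwnersOdd T)
    (ownerPotential T) (fun r => ?_)
    fun _ _ _ hinv hfree hr' => ownersOdd_and_ownerPotential_lt hG hT hinv hfree hr'
  have := piDist_eq_add_one_of_adj hT hbb' r.1
  rw [piDist_comm r.1, piDist_comm r.1] at this
  by_cases hb : piDist T b r.1 % 2 = 1
  · refine ⟨fun i => ⟨i / 2, by omega⟩, fun i =>
    ⟨Nat.mod_eq_of_lt (show (i : ℕ) / 2 < k by omega), ?_⟩⟩
    simpa [init, show (i : ℕ) / 2 < k by omega] using hb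
  · refine ⟨fun i => ⟨k + i / 2, by omega⟩, fun i => ⟨?_, ?_⟩⟩
    · show (k + (i : ℕ) / 2) % k = i / 2
      rw [Nat.add_mod_left, Nat.mod_eq_of_lt (by omega)]
    · simp only [init, show ¬ k + (i : ℕ) / 2 < k by omega, if_false]
      omega

/-- Fix `k ≥ 2`, let `T₁, …, T_{2k-1}` be trees each with at least two
vertices, let `G = T₁ □ T₂ □ ⋯ □ T_{2k-1}`, and let `t ≥ 2k`.  Then the fully
active cop number of the `t`-blowup `G^{(t)}` is strictly greater than
`2k - 1`, and hence equals `2k`. -/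
theorem acop_blowup_boxProd_trees (k t : ℕ) (hk : 2 ≤ k) (ht : 2 * k ≤ t)
    {W : Fin (2 * k - 1) → Type u} [∀ i, Fintype (W i)] [∀ i, Nontrivial (W i)]
    (T : ∀ i, SimpleGraph (W i))
    (hconn : ∀ i, (T i).Connected) (hacyclic : ∀ i, (T i).IsAcyclic) :
    2 * k - 1 < acop (blowup (piBox T) t) ∧ acop (blowup (piBox T) t) = 2 * k := by
  have hT (i : Fin (2 * k - 1)) : (T i).IsTree := ⟨hconn i, hacyclic i⟩
  have hacop : acop (blowup (piBox T) t) = 2 * k :=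
    acop_eq_of_activeCopsWin (activeCopsWin_blowup_piBox hT (by omega) (by omega) (by omega))
      fun n hn => not_activeCopsWin_blowup_piBox hT (by simp only [Fintype.card_fin]; omega)
        (by omega)
  exact ⟨by omega, hacop⟩
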